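/- (Larson–Sweedler theorem, cointegral version.) Let A be an associative unital algebra over ℂ with a comultiplication Δ. If there exist a faithful left cointegral and a faithful right cointegral in A, then the four linear maps on A ⊗ A determined by a ⊗ b ↦ Δ(a)(1 ⊗ b), a ⊗ b ↦ Δ(a)(b ⊗ 1), a ⊗ b ↦ (a ⊗ 1)Δ(b), and a ⊗ b ↦ (1 ⊗ a)Δ(b) are all bijective, and (A, Δ) is a Hopf algebra: there exist a linear map ε : A → ℂ and a linear map S : A → A such that (ε ⊗ id)(Δ(a)) = a, (id ⊗ ε)(Δ(a)) = a, m(S ⊗ id)(Δ(a)) = ε(a)·1 and m(id ⊗ S)(Δ(a)) = ε(a)·1 for all a ∈ A, where m denotes the multiplication map A ⊗ A → A. -/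
import Mathlib


open TensorProduct

noncomputable section

variable {A : Type*} [Ring A] [Algebra ℂ A]

/-- The slice map `id ⊗ ω : A ⊗ A → A`. -/
def sliceR (ω : A →ₗ[ℂ] ℂ) : A ⊗[ℂ] A →ₗ[ℂ] A :=
  (TensorProduct.rid ℂ A).toLinearMap ∘ₗ TensorProduct.map LinearMap.id ω

/-- The slice map `ω ⊗ id : A ⊗ A → A`. -/
def sliceL (ω : A →ₗ[ℂ] ℂ) : A ⊗[ℂ] A →ₗ[ℂ] A :=
  (TensorProduct.lid ℂ A).toLinearMap ∘ₗ TensorProduct.map ω LinearMap.id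

/-- Coassociativity of a comultiplication `Δ : A → A ⊗ A`:
`(Δ ⊗ id) ∘ Δ = (id ⊗ Δ) ∘ Δ` (up to the associator). -/
def IsCoassoc (Δ : A →ₐ[ℂ] A ⊗[ℂ] A) : Prop :=
  ∀ a : A,
    TensorProduct.assoc ℂ A A A (TensorProduct.map Δ.toLinearMap LinearMap.id (Δ a)) =
      TensorProduct.map LinearMap.id Δ.toLinearMap (Δ a)

/-- A left integral: a nonzero functional with `(id ⊗ φ)(Δ a) = φ(a)·1` for all `a`. -/
def IsLeftIntegral (Δ : A →ₐ[ℂ] A ⊗[ℂ] A) (φ : A →ₗ[ℂ] ℂ) : Prop :=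
  φ ≠ 0 ∧ ∀ a : A, sliceR φ (Δ a) = φ a • (1 : A)

/-- A right integral: a nonzero functional with `(ψ ⊗ id)(Δ a) = ψ(a)·1` for all `a`. -/
def IsRightIntegral (Δ : A →ₐ[ℂ] A ⊗[ℂ] A) (ψ : A →ₗ[ℂ] ℂ) : Prop :=
  ψ ≠ 0 ∧ ∀ a : A, sliceL ψ (Δ a) = ψ a • (1 : A)

/-- A faithful functional: the bilinear form `(a, b) ↦ ω(ab)` is non-degenerate. -/
def IsFaithful (ω : A →ₗ[ℂ] ℂ) : Prop :=
  (∀ b : A, (∀ a : A, ω (a * b) = 0) → b = 0) ∧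
  (∀ b : A, (∀ a : A, ω (b * a) = 0) → b = 0)

/-- The left leg of an element `x ∈ A ⊗ A`: the span of `{(id ⊗ ω)(x) : ω ∈ A*}`. -/
def leftLegOf (x : A ⊗[ℂ] A) : Submodule ℂ A :=
  Submodule.span ℂ {y : A | ∃ ω : A →ₗ[ℂ] ℂ, y = sliceR ω x}

/-- The right leg of an element `x ∈ A ⊗ A`: the span of `{(ω ⊗ id)(x) : ω ∈ A*}`. -/
def rightLegOf (x : A ⊗[ℂ] A) : Submodule ℂ A :=
  Submodule.span ℂ {y : A | ∃ ω : A →ₗ[ℂ] ℂ, y = sliceL ω x}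

/-- The left leg of `Δ`: the span of `{(id ⊗ ω)(Δ a) : a ∈ A, ω ∈ A*}`. -/
def leftLeg (Δ : A →ₐ[ℂ] A ⊗[ℂ] A) : Submodule ℂ A :=
  Submodule.span ℂ {y : A | ∃ (a : A) (ω : A →ₗ[ℂ] ℂ), y = sliceR ω (Δ a)}

/-- The right leg of `Δ`: the span of `{(ω ⊗ id)(Δ a) : a ∈ A, ω ∈ A*}`. -/
def rightLeg (Δ : A →ₐ[ℂ] A ⊗[ℂ] A) : Submodule ℂ A :=
  Submodule.span ℂ {y : A | ∃ (a : A) (ω : A →ₗ[ℂ] ℂ), y = sliceL ω (Δ a)}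

/-- A comultiplication is full if both of its legs are all of `A`. -/
def IsFull (Δ : A →ₐ[ℂ] A ⊗[ℂ] A) : Prop :=
  leftLeg Δ = ⊤ ∧ rightLeg Δ = ⊤

/-- The linear map `T₁` with `T₁ (a ⊗ b) = Δ(a) * (1 ⊗ b)`. -/
def T1 (Δ : A →ₐ[ℂ] A ⊗[ℂ] A) : A ⊗[ℂ] A →ₗ[ℂ] A ⊗[ℂ] A :=
  LinearMap.mul' ℂ (A ⊗[ℂ] A) ∘ₗ
    TensorProduct.map Δ.toLinearMap (TensorProduct.mk ℂ A A 1)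

/-- The linear map `T₁'` with `T₁' (a ⊗ b) = Δ(a) * (b ⊗ 1)`. -/
def T1' (Δ : A →ₐ[ℂ] A ⊗[ℂ] A) : A ⊗[ℂ] A →ₗ[ℂ] A ⊗[ℂ] A :=
  LinearMap.mul' ℂ (A ⊗[ℂ] A) ∘ₗ
    TensorProduct.map Δ.toLinearMap ((TensorProduct.mk ℂ A A).flip 1)

/-- The linear map `T₂` with `T₂ (a ⊗ b) = (a ⊗ 1) * Δ(b)`. -/
def T2 (Δ : A →ₐ[ℂ] A ⊗[ℂ] A) : A ⊗[ℂ] A →ₗ[ℂ] A ⊗[ℂ] A :=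
  LinearMap.mul' ℂ (A ⊗[ℂ] A) ∘ₗ
    TensorProduct.map ((TensorProduct.mk ℂ A A).flip 1) Δ.toLinearMap

/-- The linear map `T₂'` with `T₂' (a ⊗ b) = (1 ⊗ a) * Δ(b)`. -/
def T2' (Δ : A →ₐ[ℂ] A ⊗[ℂ] A) : A ⊗[ℂ] A →ₗ[ℂ] A ⊗[ℂ] A :=
  LinearMap.mul' ℂ (A ⊗[ℂ] A) ∘ₗ
    TensorProduct.map (TensorProduct.mk ℂ A A 1) Δ.toLinearMap

/-- A left cointegral: a nonzero element `h` with `Δ(a)(1 ⊗ h) = a ⊗ h` for all `a`. -/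
def IsLeftCointegral (Δ : A →ₐ[ℂ] A ⊗[ℂ] A) (h : A) : Prop :=
  h ≠ 0 ∧ ∀ a : A, Δ a * ((1 : A) ⊗ₜ[ℂ] h) = a ⊗ₜ[ℂ] h

/-- A right cointegral: a nonzero element `k` with `(k ⊗ 1)Δ(a) = k ⊗ a` for all `a`. -/
def IsRightCointegral (Δ : A →ₐ[ℂ] A ⊗[ℂ] A) (k : A) : Prop :=
  k ≠ 0 ∧ ∀ a : A, (k ⊗ₜ[ℂ] (1 : A)) * Δ a = k ⊗ₜ[ℂ] a

/-- `Δ₁₃(a) = (1 ⊗ σ)(Δ(a) ⊗ 1)`, viewed in `A ⊗ (A ⊗ A)`. -/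
def delta13 (Δ : A →ₐ[ℂ] A ⊗[ℂ] A) (a : A) : A ⊗[ℂ] (A ⊗[ℂ] A) :=
  TensorProduct.map LinearMap.id (TensorProduct.comm ℂ A A).toLinearMap
    (TensorProduct.assoc ℂ A A A (Δ a ⊗ₜ[ℂ] (1 : A)))


/-! ### Auxiliary lemmas for the proof -/

section LSAux

@[simp] lemma sliceR_tmul (ω : A →ₗ[ℂ] ℂ) (a b : A) :
    sliceR ω (a ⊗ₜ[ℂ] b) = ω b • a := by
  simp [sliceR]

@[simp] lemma sliceL_tmul (ω : A →ₗ[ℂ] ℂ) (a b : A) :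
    sliceL ω (a ⊗ₜ[ℂ] b) = ω a • b := by
  simp [sliceL]

/-- generic right slice -/
def sliceRM {M : Type*} [AddCommGroup M] [Module ℂ M] (ω : A →ₗ[ℂ] ℂ) :
    M ⊗[ℂ] A →ₗ[ℂ] M :=
  (TensorProduct.rid ℂ M).toLinearMap ∘ₗ TensorProduct.map LinearMap.id ω

/-- generic left slice -/
def sliceLM {M : Type*} [AddCommGroup M] [Module ℂ M] (ω : A →ₗ[ℂ] ℂ) :
    A ⊗[ℂ] M →ₗ[ℂ] M :=
  (TensorProduct.lid ℂ M).toLinearMap ∘ₗ TensorProduct.map ω LinearMap.id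

@[simp] lemma sliceRM_tmul {M : Type*} [AddCommGroup M] [Module ℂ M]
    (ω : A →ₗ[ℂ] ℂ) (x : M) (a : A) : sliceRM ω (x ⊗ₜ[ℂ] a) = ω a • x := by
  simp [sliceRM]

@[simp] lemma sliceLM_tmul {M : Type*} [AddCommGroup M] [Module ℂ M]
    (ω : A →ₗ[ℂ] ℂ) (a : A) (x : M) : sliceLM ω (a ⊗ₜ[ℂ] x) = ω a • x := by
  simp [sliceLM]

lemma sliceR_eq_sliceRM (ω : A →ₗ[ℂ] ℂ) : sliceR ω = sliceRM ω := rfl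
lemma sliceL_eq_sliceLM (ω : A →ₗ[ℂ] ℂ) : sliceL ω = sliceLM ω := rfl

lemma sliceL_mul_one_tmul (ω : A →ₗ[ℂ] ℂ) (c : A) (z : A ⊗[ℂ] A) :
    sliceL ω (z * ((1:A) ⊗ₜ[ℂ] c)) = sliceL ω z * c := by
  induction z using TensorProduct.induction_on with
  | zero => simp
  | tmul u v => simp [Algebra.TensorProduct.tmul_mul_tmul, smul_mul_assoc]
  | add x y hx hy => simp [add_mul, hx, hy]

lemma sliceL_one_tmul_mul (ω : A →ₗ[ℂ] ℂ) (c : A) (z : A ⊗[ℂ] A) :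
    sliceL ω (((1:A) ⊗ₜ[ℂ] c) * z) = c * sliceL ω z := by
  induction z using TensorProduct.induction_on with
  | zero => simp
  | tmul u v => simp [Algebra.TensorProduct.tmul_mul_tmul, mul_smul_comm]
  | add x y hx hy => simp [mul_add, hx, hy]

lemma sliceR_mul_tmul_one (ω : A →ₗ[ℂ] ℂ) (c : A) (z : A ⊗[ℂ] A) :
    sliceR ω (z * (c ⊗ₜ[ℂ] (1:A))) = sliceR ω z * c := by
  induction z using TensorProduct.induction_on with
  | zero => simp
  | tmul u v => simp [Algebra.TensorProduct.tmul_mul_tmul, smul_mul_assoc]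
  | add x y hx hy => simp [add_mul, hx, hy]

lemma sliceR_tmul_one_mul (ω : A →ₗ[ℂ] ℂ) (c : A) (z : A ⊗[ℂ] A) :
    sliceR ω ((c ⊗ₜ[ℂ] (1:A)) * z) = c * sliceR ω z := by
  induction z using TensorProduct.induction_on with
  | zero => simp
  | tmul u v => simp [Algebra.TensorProduct.tmul_mul_tmul, mul_smul_comm]
  | add x y hx hy => simp [mul_add, hx, hy]

lemma apply_sliceR (η ρ : A →ₗ[ℂ] ℂ) (z : A ⊗[ℂ] A) :
    η (sliceR ρ z) = ρ (sliceL η z) := by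
  induction z using TensorProduct.induction_on with
  | zero => simp
  | tmul u v => simp [mul_comm]
  | add x y hx hy => simp [hx, hy]

lemma sliceR_map_left (η : A →ₗ[ℂ] ℂ) (f : A →ₗ[ℂ] A) (z : A ⊗[ℂ] A) :
    sliceR η (TensorProduct.map f LinearMap.id z) = f (sliceR η z) := by
  induction z using TensorProduct.induction_on with
  | zero => simp
  | tmul u v => simp
  | add x y hx hy => simp [hx, hy]

lemma sliceL_map_right (η : A →ₗ[ℂ] ℂ) (f : A →ₗ[ℂ] A) (z : A ⊗[ℂ] A) :
    sliceL η (TensorProduct.map LinearMap.id f z) = f (sliceL η z) := by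
  induction z using TensorProduct.induction_on with
  | zero => simp
  | tmul u v => simp
  | add x y hx hy => simp [hx, hy]

lemma sliceR_add_fun (ω ω' : A →ₗ[ℂ] ℂ) (z : A ⊗[ℂ] A) :
    sliceR (ω + ω') z = sliceR ω z + sliceR ω' z := by
  induction z using TensorProduct.induction_on with
  | zero => simp
  | tmul u v => simp [add_smul]
  | add x y hx hy => simp only [map_add, hx, hy]; abel

lemma sliceR_smul_fun (c : ℂ) (ω : A →ₗ[ℂ] ℂ) (z : A ⊗[ℂ] A) :
    sliceR (c • ω) z = c • sliceR ω z := by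
  induction z using TensorProduct.induction_on with
  | zero => simp
  | tmul u v => simp [smul_smul]
  | add x y hx hy => simp only [map_add, hx, hy, smul_add]

lemma sliceL_add_fun (ω ω' : A →ₗ[ℂ] ℂ) (z : A ⊗[ℂ] A) :
    sliceL (ω + ω') z = sliceL ω z + sliceL ω' z := by
  induction z using TensorProduct.induction_on with
  | zero => simp
  | tmul u v => simp [add_smul]
  | add x y hx hy => simp only [map_add, hx, hy]; abel

lemma sliceL_smul_fun (c : ℂ) (ω : A →ₗ[ℂ] ℂ) (z : A ⊗[ℂ] A) :
    sliceL (c • ω) z = c • sliceL ω z := by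
  induction z using TensorProduct.induction_on with
  | zero => simp
  | tmul u v => simp [smul_smul]
  | add x y hx hy => simp only [map_add, hx, hy, smul_add]

lemma exists_one_functional {v : A} (hv : v ≠ 0) : ∃ ω : A →ₗ[ℂ] ℂ, ω v = 1 := by
  have hinj : Function.Injective (LinearMap.toSpanSingleton ℂ A v) := by
    intro c d hcd
    simp only [LinearMap.toSpanSingleton_apply] at hcd
    exact smul_left_injective ℂ hv hcd
  obtain ⟨g, hg⟩ := (LinearMap.toSpanSingleton ℂ A v).exists_leftInverse_of_injective
    (LinearMap.ker_eq_bot.mpr hinj)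
  refine ⟨g, ?_⟩
  have := LinearMap.congr_fun hg 1
  simpa [LinearMap.toSpanSingleton_apply] using this

lemma exists_sliceR_eq (t : A ⊗[ℂ] A) (ht : leftLegOf t = ⊤) (x : A) :
    ∃ ω : A →ₗ[ℂ] ℂ, sliceR ω t = x := by
  let Φ : (A →ₗ[ℂ] ℂ) →ₗ[ℂ] A :=
    { toFun := fun ω => sliceR ω t
      map_add' := fun ω ω' => sliceR_add_fun ω ω' t
      map_smul' := fun c ω => sliceR_smul_fun c ω t }
  have hr : LinearMap.range Φ = leftLegOf t := by
    rw [leftLegOf]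
    have : {y : A | ∃ ω : A →ₗ[ℂ] ℂ, y = sliceR ω t} = Set.range Φ := by
      ext y; constructor
      · rintro ⟨ω, rfl⟩; exact ⟨ω, rfl⟩
      · rintro ⟨ω, rfl⟩; exact ⟨ω, rfl⟩
    rw [this, Submodule.span_eq_of_le]
    · rintro y ⟨ω, rfl⟩; exact ⟨ω, rfl⟩
    · rintro y ⟨ω, rfl⟩; exact Submodule.subset_span ⟨ω, rfl⟩
  have : x ∈ LinearMap.range Φ := by rw [hr, ht]; trivial
  obtain ⟨ω, hω⟩ := this
  exact ⟨ω, hω⟩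

lemma exists_sliceL_eq (t : A ⊗[ℂ] A) (ht : rightLegOf t = ⊤) (x : A) :
    ∃ ω : A →ₗ[ℂ] ℂ, sliceL ω t = x := by
  let Φ : (A →ₗ[ℂ] ℂ) →ₗ[ℂ] A :=
    { toFun := fun ω => sliceL ω t
      map_add' := fun ω ω' => sliceL_add_fun ω ω' t
      map_smul' := fun c ω => sliceL_smul_fun c ω t }
  have hr : LinearMap.range Φ = rightLegOf t := by
    rw [rightLegOf]
    have : {y : A | ∃ ω : A →ₗ[ℂ] ℂ, y = sliceL ω t} = Set.range Φ := by
      ext y; constructor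
      · rintro ⟨ω, rfl⟩; exact ⟨ω, rfl⟩
      · rintro ⟨ω, rfl⟩; exact ⟨ω, rfl⟩
    rw [this, Submodule.span_eq_of_le]
    · rintro y ⟨ω, rfl⟩; exact ⟨ω, rfl⟩
    · rintro y ⟨ω, rfl⟩; exact Submodule.subset_span ⟨ω, rfl⟩
  have : x ∈ LinearMap.range Φ := by rw [hr, ht]; trivial
  obtain ⟨ω, hω⟩ := this
  exact ⟨ω, hω⟩

lemma finiteDimensional_of_leftLegOf (t : A ⊗[ℂ] A) (ht : leftLegOf t = ⊤) :
    FiniteDimensional ℂ A := by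
  classical
  obtain ⟨s, hs⟩ := TensorProduct.exists_finset t
  refine ⟨⟨s.image Prod.fst, ?_⟩⟩
  rw [eq_top_iff, ← ht, leftLegOf]
  rw [Submodule.span_le]
  rintro y ⟨ω, rfl⟩
  rw [hs, map_sum]
  refine Submodule.sum_mem _ fun p hp => ?_
  rw [sliceR_tmul]
  exact Submodule.smul_mem _ _ (Submodule.subset_span
    (Finset.mem_coe.mpr (Finset.mem_image_of_mem _ hp)))

end LSAux

section LSAux2
set_option synthInstance.maxHeartbeats 1000000
set_option maxHeartbeats 1000000

/-- `x ↦ (ω ⊗ id)(t (x ⊗ 1))` -/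
def antL (t : A ⊗[ℂ] A) (ω : A →ₗ[ℂ] ℂ) : A →ₗ[ℂ] A :=
  sliceL ω ∘ₗ LinearMap.mulLeft ℂ t ∘ₗ (TensorProduct.mk ℂ A A).flip 1

/-- `x ↦ (id ⊗ ω)((1 ⊗ x) t)` -/
def antR (t : A ⊗[ℂ] A) (ω : A →ₗ[ℂ] ℂ) : A →ₗ[ℂ] A :=
  sliceR ω ∘ₗ LinearMap.mulRight ℂ t ∘ₗ TensorProduct.mk ℂ A A 1

@[simp] lemma antL_apply (t : A ⊗[ℂ] A) (ω : A →ₗ[ℂ] ℂ) (x : A) :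
    antL t ω x = sliceL ω (t * (x ⊗ₜ[ℂ] (1:A))) := rfl

@[simp] lemma antR_apply (t : A ⊗[ℂ] A) (ω : A →ₗ[ℂ] ℂ) (x : A) :
    antR t ω x = sliceR ω (((1:A) ⊗ₜ[ℂ] x) * t) := rfl

/-- convolution of two linear maps -/
def convL (Δ : A →ₐ[ℂ] A ⊗[ℂ] A) (f g : A →ₗ[ℂ] A) : A →ₗ[ℂ] A :=
  LinearMap.mul' ℂ A ∘ₗ TensorProduct.map f g ∘ₗ Δ.toLinearMap

lemma convL_apply (Δ : A →ₐ[ℂ] A ⊗[ℂ] A) (f g : A →ₗ[ℂ] A) (a : A) :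
    convL Δ f g a = LinearMap.mul' ℂ A (TensorProduct.map f g (Δ a)) := rfl

lemma G1gen (Δ : A →ₐ[ℂ] A ⊗[ℂ] A) (t : A ⊗[ℂ] A) (ε : A →ₗ[ℂ] ℂ)
    (habs : ∀ a : A, t * Δ a = ε a • t) (z : A ⊗[ℂ] A) :
    (t ⊗ₜ[ℂ] (1:A)) * (TensorProduct.map Δ.toLinearMap LinearMap.id z) =
      t ⊗ₜ[ℂ] sliceL ε z := by
  induction z using TensorProduct.induction_on with
  | zero => simp
  | tmul p q =>
      simp only [TensorProduct.map_tmul, LinearMap.id_coe, id_eq, AlgHom.toLinearMap_apply,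
        Algebra.TensorProduct.tmul_mul_tmul, one_mul, habs p, sliceL_tmul]
      rw [TensorProduct.smul_tmul]
  | add x y hx hy => simp only [map_add, mul_add, hx, hy, TensorProduct.tmul_add]

lemma H3gen (Δ : A →ₐ[ℂ] A ⊗[ℂ] A) (t : A ⊗[ℂ] A) (ε : A →ₗ[ℂ] ℂ)
    (habs : ∀ a : A, Δ a * t = ε a • t) (z : A ⊗[ℂ] A) :
    (TensorProduct.map LinearMap.id Δ.toLinearMap z) * ((1:A) ⊗ₜ[ℂ] t) =
      (sliceR ε z) ⊗ₜ[ℂ] t := by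
  induction z using TensorProduct.induction_on with
  | zero => simp
  | tmul p q =>
      simp only [TensorProduct.map_tmul, LinearMap.id_coe, id_eq, AlgHom.toLinearMap_apply,
        Algebra.TensorProduct.tmul_mul_tmul, mul_one, habs q, sliceR_tmul]
      rw [TensorProduct.smul_tmul]
  | add x y hx hy => simp only [map_add, add_mul, hx, hy, TensorProduct.add_tmul]

lemma D1r (Δ : A →ₐ[ℂ] A ⊗[ℂ] A) (η : A →ₗ[ℂ] ℂ) (z : A ⊗[ℂ] A) :
    Δ (sliceR η z) = sliceRM η (TensorProduct.map Δ.toLinearMap LinearMap.id z) := by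
  induction z using TensorProduct.induction_on with
  | zero => simp
  | tmul p q => simp
  | add x y hx hy => simp only [map_add, hx, hy]

lemma D1l (Δ : A →ₐ[ℂ] A ⊗[ℂ] A) (η : A →ₗ[ℂ] ℂ) (z : A ⊗[ℂ] A) :
    Δ (sliceL η z) = sliceLM η (TensorProduct.map LinearMap.id Δ.toLinearMap z) := by
  induction z using TensorProduct.induction_on with
  | zero => simp
  | tmul p q => simp
  | add x y hx hy => simp only [map_add, hx, hy]

lemma Jgen1 (t : A ⊗[ℂ] A) (ω η : A →ₗ[ℂ] ℂ) (y : (A ⊗[ℂ] A) ⊗[ℂ] A) :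
    LinearMap.mul' ℂ A (TensorProduct.map (antL t ω) LinearMap.id (sliceRM η y)) =
      sliceR η (TensorProduct.map (sliceL ω) LinearMap.id ((t ⊗ₜ[ℂ] (1:A)) * y)) := by
  induction y using TensorProduct.induction_on with
  | zero => simp
  | tmul w r =>
      induction w using TensorProduct.induction_on with
      | zero => simp
      | tmul p q =>
          simp only [sliceRM_tmul, map_smul, TensorProduct.map_tmul, antL_apply,
            LinearMap.id_coe, id_eq, Algebra.TensorProduct.tmul_mul_tmul, one_mul,
            LinearMap.mul'_apply, sliceR_tmul]
          rw [← sliceL_mul_one_tmul, mul_assoc, Algebra.TensorProduct.tmul_mul_tmul,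
            one_mul, mul_one]
      | add x y hx hy =>
          simp only [TensorProduct.add_tmul, add_mul, map_add, mul_add, hx, hy]
  | add x y hx hy => simp only [map_add, add_mul, mul_add, hx, hy]

lemma Jgen2 (t : A ⊗[ℂ] A) (ω η : A →ₗ[ℂ] ℂ) (y : A ⊗[ℂ] (A ⊗[ℂ] A)) :
    LinearMap.mul' ℂ A (TensorProduct.map LinearMap.id (antR t ω) (sliceLM η y)) =
      sliceL η (TensorProduct.map LinearMap.id (sliceR ω) (y * ((1:A) ⊗ₜ[ℂ] t))) := by
  induction y using TensorProduct.induction_on with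
  | zero => simp
  | tmul r w =>
      induction w using TensorProduct.induction_on with
      | zero => simp
      | tmul p q =>
          simp only [sliceLM_tmul, map_smul, TensorProduct.map_tmul, antR_apply,
            LinearMap.id_coe, id_eq, Algebra.TensorProduct.tmul_mul_tmul, mul_one,
            LinearMap.mul'_apply, sliceL_tmul]
          rw [← sliceR_tmul_one_mul, ← mul_assoc, Algebra.TensorProduct.tmul_mul_tmul,
            one_mul, mul_one]
      | add x y hx hy =>
          simp only [TensorProduct.tmul_add, add_mul, map_add, mul_add, hx, hy]
  | add x y hx hy => simp only [map_add, add_mul, mul_add, hx, hy]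

lemma m1 (Δ : A →ₐ[ℂ] A ⊗[ℂ] A) (b : A) (z : A ⊗[ℂ] A) :
    TensorProduct.map LinearMap.id Δ.toLinearMap (z * (b ⊗ₜ[ℂ] (1:A))) =
      (TensorProduct.map LinearMap.id Δ.toLinearMap z) * (b ⊗ₜ[ℂ] (1 : A ⊗[ℂ] A)) := by
  induction z using TensorProduct.induction_on with
  | zero => simp
  | tmul u v =>
      simp only [Algebra.TensorProduct.tmul_mul_tmul, TensorProduct.map_tmul,
        LinearMap.id_coe, id_eq, AlgHom.toLinearMap_apply, mul_one]
  | add x y hx hy => simp only [add_mul, map_add, hx, hy]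

lemma m1' (Δ : A →ₐ[ℂ] A ⊗[ℂ] A) (a : A) (z : A ⊗[ℂ] A) :
    TensorProduct.map Δ.toLinearMap LinearMap.id (((1:A) ⊗ₜ[ℂ] a) * z) =
      ((1 : A ⊗[ℂ] A) ⊗ₜ[ℂ] a) * (TensorProduct.map Δ.toLinearMap LinearMap.id z) := by
  induction z using TensorProduct.induction_on with
  | zero => simp
  | tmul u v =>
      simp only [Algebra.TensorProduct.tmul_mul_tmul, TensorProduct.map_tmul,
        LinearMap.id_coe, id_eq, AlgHom.toLinearMap_apply, one_mul]
  | add x y hx hy => simp only [mul_add, map_add, hx, hy]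

lemma m2 (w : A ⊗[ℂ] (A ⊗[ℂ] A)) (b : A) :
    (TensorProduct.assoc ℂ A A A).symm (w * (b ⊗ₜ[ℂ] (1 : A ⊗[ℂ] A))) =
      ((TensorProduct.assoc ℂ A A A).symm w) * ((b ⊗ₜ[ℂ] (1:A)) ⊗ₜ[ℂ] (1:A)) := by
  induction w using TensorProduct.induction_on with
  | zero => simp
  | tmul u w₂ =>
      induction w₂ using TensorProduct.induction_on with
      | zero => simp
      | tmul p q =>
          simp only [Algebra.TensorProduct.tmul_mul_tmul, mul_one,
            TensorProduct.assoc_symm_tmul, one_mul]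
      | add x y hx hy =>
          simp only [TensorProduct.tmul_add, map_add, add_mul, hx, hy]
  | add x y hx hy => simp only [add_mul, map_add, hx, hy]

lemma m2' (w : (A ⊗[ℂ] A) ⊗[ℂ] A) (a : A) :
    (TensorProduct.assoc ℂ A A A) (((1 : A ⊗[ℂ] A) ⊗ₜ[ℂ] a) * w) =
      ((1:A) ⊗ₜ[ℂ] ((1:A) ⊗ₜ[ℂ] a)) * (TensorProduct.assoc ℂ A A A w) := by
  induction w using TensorProduct.induction_on with
  | zero => simp
  | tmul w₁ r =>
      induction w₁ using TensorProduct.induction_on with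
      | zero => simp
      | tmul p q =>
          simp only [Algebra.TensorProduct.tmul_mul_tmul, one_mul,
            TensorProduct.assoc_tmul]
      | add x y hx hy =>
          simp only [TensorProduct.add_tmul, map_add, mul_add, add_mul, hx, hy]
  | add x y hx hy => simp only [mul_add, map_add, hx, hy]

lemma mulvar_right (f g : A →ₗ[ℂ] A) (d : A) (z : A ⊗[ℂ] A) :
    LinearMap.mul' ℂ A (TensorProduct.map f (LinearMap.mulRight ℂ d ∘ₗ g) z) =
      LinearMap.mul' ℂ A (TensorProduct.map f g z) * d := by
  induction z using TensorProduct.induction_on with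
  | zero => simp
  | tmul p q => simp [mul_assoc]
  | add x y hx hy => simp only [map_add, add_mul, hx, hy]

lemma mulvar_left (f g : A →ₗ[ℂ] A) (c : A) (z : A ⊗[ℂ] A) :
    LinearMap.mul' ℂ A (TensorProduct.map (LinearMap.mulLeft ℂ c ∘ₗ f) g z) =
      c * LinearMap.mul' ℂ A (TensorProduct.map f g z) := by
  induction z using TensorProduct.induction_on with
  | zero => simp
  | tmul p q => simp [mul_assoc]
  | add x y hx hy => simp only [map_add, mul_add, hx, hy]

lemma map_smulRight_right (ω : A →ₗ[ℂ] ℂ) (d : A) (z : A ⊗[ℂ] A) :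
    TensorProduct.map LinearMap.id (ω.smulRight d) z = (sliceR ω z) ⊗ₜ[ℂ] d := by
  induction z using TensorProduct.induction_on with
  | zero => simp
  | tmul p q =>
      simp only [TensorProduct.map_tmul, LinearMap.id_coe, id_eq,
        LinearMap.smulRight_apply, sliceR_tmul, TensorProduct.smul_tmul,
        TensorProduct.tmul_smul]
  | add x y hx hy => simp only [map_add, hx, hy, TensorProduct.add_tmul]

lemma map_smulRight_left (ω : A →ₗ[ℂ] ℂ) (c : A) (z : A ⊗[ℂ] A) :
    TensorProduct.map (ω.smulRight c) LinearMap.id z = c ⊗ₜ[ℂ] (sliceL ω z) := by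
  induction z using TensorProduct.induction_on with
  | zero => simp
  | tmul p q =>
      simp only [TensorProduct.map_tmul, LinearMap.id_coe, id_eq,
        LinearMap.smulRight_apply, sliceL_tmul, TensorProduct.smul_tmul,
        TensorProduct.tmul_smul]
  | add x y hx hy => simp only [map_add, hx, hy, TensorProduct.tmul_add]

lemma mul_map_smulRight_one_left (ω : A →ₗ[ℂ] ℂ) (f : A →ₗ[ℂ] A) (z : A ⊗[ℂ] A) :
    LinearMap.mul' ℂ A (TensorProduct.map (ω.smulRight (1:A)) f z) = f (sliceL ω z) := by
  induction z using TensorProduct.induction_on with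
  | zero => simp
  | tmul p q => simp [smul_mul_assoc]
  | add x y hx hy => simp only [map_add, hx, hy]

lemma mul_map_smulRight_one_right (ω : A →ₗ[ℂ] ℂ) (f : A →ₗ[ℂ] A) (z : A ⊗[ℂ] A) :
    LinearMap.mul' ℂ A (TensorProduct.map f (ω.smulRight (1:A)) z) = f (sliceR ω z) := by
  induction z using TensorProduct.induction_on with
  | zero => simp
  | tmul p q => simp [mul_smul_comm]
  | add x y hx hy => simp only [map_add, hx, hy]

lemma cs1 (Δ : A →ₐ[ℂ] A ⊗[ℂ] A) (f g j : A →ₗ[ℂ] A) (z : A ⊗[ℂ] A) :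
    LinearMap.mul' ℂ A (TensorProduct.map (convL Δ f g) j z) =
      LinearMap.mul' ℂ A (TensorProduct.map (LinearMap.mul' ℂ A ∘ₗ TensorProduct.map f g) j
        (TensorProduct.map Δ.toLinearMap LinearMap.id z)) := by
  induction z using TensorProduct.induction_on with
  | zero => simp
  | tmul p q => simp [convL]
  | add x y hx hy => simp only [map_add, hx, hy]

lemma cs2 (f g j : A →ₗ[ℂ] A) (y : A ⊗[ℂ] (A ⊗[ℂ] A)) :
    LinearMap.mul' ℂ A (TensorProduct.map (LinearMap.mul' ℂ A ∘ₗ TensorProduct.map f g) j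
        ((TensorProduct.assoc ℂ A A A).symm y)) =
      LinearMap.mul' ℂ A (TensorProduct.map f (LinearMap.mul' ℂ A ∘ₗ TensorProduct.map g j) y) := by
  induction y using TensorProduct.induction_on with
  | zero => simp
  | tmul p w =>
      induction w using TensorProduct.induction_on with
      | zero => simp
      | tmul q r => simp [mul_assoc]
      | add x y hx hy => simp only [TensorProduct.tmul_add, map_add, hx, hy]
  | add x y hx hy => simp only [map_add, hx, hy]

lemma cs3 (Δ : A →ₐ[ℂ] A ⊗[ℂ] A) (f g j : A →ₗ[ℂ] A) (z : A ⊗[ℂ] A) :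
    LinearMap.mul' ℂ A (TensorProduct.map f (LinearMap.mul' ℂ A ∘ₗ TensorProduct.map g j)
        (TensorProduct.map LinearMap.id Δ.toLinearMap z)) =
      LinearMap.mul' ℂ A (TensorProduct.map f (convL Δ g j) z) := by
  induction z using TensorProduct.induction_on with
  | zero => simp
  | tmul p q => simp [convL]
  | add x y hx hy => simp only [map_add, hx, hy]

lemma conv_assoc (Δ : A →ₐ[ℂ] A ⊗[ℂ] A) (hΔ : IsCoassoc Δ) (f g j : A →ₗ[ℂ] A) :
    convL Δ (convL Δ f g) j = convL Δ f (convL Δ g j) := by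
  ext a
  rw [convL_apply, convL_apply, cs1]
  have e : TensorProduct.map Δ.toLinearMap LinearMap.id (Δ a) =
      (TensorProduct.assoc ℂ A A A).symm
        (TensorProduct.map LinearMap.id Δ.toLinearMap (Δ a)) :=
    (LinearEquiv.eq_symm_apply _).mpr (hΔ a)
  rw [e, cs2, cs3]

end LSAux2

section LSAux3
set_option synthInstance.maxHeartbeats 1000000
set_option maxHeartbeats 1000000

@[simp] lemma T1_tmul (Δ : A →ₐ[ℂ] A ⊗[ℂ] A) (a b : A) :
    T1 Δ (a ⊗ₜ[ℂ] b) = Δ a * ((1:A) ⊗ₜ[ℂ] b) := by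
  simp [T1]

@[simp] lemma T1'_tmul (Δ : A →ₐ[ℂ] A ⊗[ℂ] A) (a b : A) :
    T1' Δ (a ⊗ₜ[ℂ] b) = Δ a * (b ⊗ₜ[ℂ] (1:A)) := by
  simp [T1']

@[simp] lemma T2_tmul (Δ : A →ₐ[ℂ] A ⊗[ℂ] A) (a b : A) :
    T2 Δ (a ⊗ₜ[ℂ] b) = (a ⊗ₜ[ℂ] (1:A)) * Δ b := by
  simp [T2]

@[simp] lemma T2'_tmul (Δ : A →ₐ[ℂ] A ⊗[ℂ] A) (a b : A) :
    T2' Δ (a ⊗ₜ[ℂ] b) = ((1:A) ⊗ₜ[ℂ] a) * Δ b := by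
  simp [T2']

lemma map_map_right {P Q : Type*} [AddCommGroup P] [Module ℂ P] [AddCommGroup Q] [Module ℂ Q]
    (F : P →ₗ[ℂ] Q) (G : A →ₗ[ℂ] P) (z : A ⊗[ℂ] A) :
    TensorProduct.map LinearMap.id F (TensorProduct.map LinearMap.id G z) =
      TensorProduct.map LinearMap.id (F ∘ₗ G) z := by
  rw [← LinearMap.comp_apply, ← TensorProduct.map_comp, LinearMap.id_comp]

lemma map_map_left {P Q : Type*} [AddCommGroup P] [Module ℂ P] [AddCommGroup Q] [Module ℂ Q]
    (F : P →ₗ[ℂ] Q) (G : A →ₗ[ℂ] P) (z : A ⊗[ℂ] A) :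
    TensorProduct.map F LinearMap.id (TensorProduct.map G LinearMap.id z) =
      TensorProduct.map (F ∘ₗ G) LinearMap.id z := by
  rw [← LinearMap.comp_apply, ← TensorProduct.map_comp, LinearMap.id_comp]

lemma slice_comp_R (ω : A →ₗ[ℂ] ℂ) (c : A) (z : A ⊗[ℂ] A) :
    sliceR (ω ∘ₗ LinearMap.mulRight ℂ c) z = sliceR ω (z * ((1:A) ⊗ₜ[ℂ] c)) := by
  induction z using TensorProduct.induction_on with
  | zero => simp
  | tmul u v => simp [Algebra.TensorProduct.tmul_mul_tmul]
  | add x y hx hy => simp only [map_add, add_mul, hx, hy]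

lemma slice_comp_L (ω : A →ₗ[ℂ] ℂ) (c : A) (z : A ⊗[ℂ] A) :
    sliceL (ω ∘ₗ LinearMap.mulLeft ℂ c) z = sliceL ω ((c ⊗ₜ[ℂ] (1:A)) * z) := by
  induction z using TensorProduct.induction_on with
  | zero => simp
  | tmul u v => simp [Algebra.TensorProduct.tmul_mul_tmul]
  | add x y hx hy => simp only [map_add, mul_add, hx, hy]

-- inner rearrangement lemmas used in the inverses of T1 and T2
lemma inner1 (S : A →ₗ[ℂ] A) (q d : A) (w : A ⊗[ℂ] A) :
    TensorProduct.map LinearMap.id (LinearMap.mul' ℂ A ∘ₗ TensorProduct.map S LinearMap.id)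
      (TensorProduct.assoc ℂ A A A (w ⊗ₜ[ℂ] (q * d))) =
    TensorProduct.map LinearMap.id (LinearMap.mul' ℂ A ∘ₗ TensorProduct.map S (LinearMap.mulRight ℂ d))
      (TensorProduct.assoc ℂ A A A (w ⊗ₜ[ℂ] q)) := by
  induction w using TensorProduct.induction_on with
  | zero => simp
  | tmul w₁ w₂ => simp [TensorProduct.assoc_tmul]
  | add x y hx hy => simp only [TensorProduct.add_tmul, map_add, hx, hy]

lemma inner2 (S : A →ₗ[ℂ] A) (q c : A) (w : A ⊗[ℂ] A) :
    TensorProduct.map (LinearMap.mul' ℂ A ∘ₗ TensorProduct.map LinearMap.id S) LinearMap.id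
      ((TensorProduct.assoc ℂ A A A).symm ((c * q) ⊗ₜ[ℂ] w)) =
    TensorProduct.map (LinearMap.mul' ℂ A ∘ₗ TensorProduct.map (LinearMap.mulLeft ℂ c) S) LinearMap.id
      ((TensorProduct.assoc ℂ A A A).symm (q ⊗ₜ[ℂ] w)) := by
  induction w using TensorProduct.induction_on with
  | zero => simp
  | tmul w₁ w₂ => simp [TensorProduct.assoc_symm_tmul, mul_assoc]
  | add x y hx hy => simp only [TensorProduct.tmul_add, map_add, hx, hy]

lemma claimB2gen (S : A →ₗ[ℂ] A) (d : A) (y : A ⊗[ℂ] (A ⊗[ℂ] A)) :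
    LinearMap.mul' ℂ (A ⊗[ℂ] A)
      (TensorProduct.map LinearMap.id
        (TensorProduct.mk ℂ A A 1 ∘ₗ LinearMap.mulRight ℂ d ∘ₗ S)
        ((TensorProduct.assoc ℂ A A A).symm y)) =
    TensorProduct.map LinearMap.id
      (LinearMap.mul' ℂ A ∘ₗ TensorProduct.map LinearMap.id (LinearMap.mulRight ℂ d ∘ₗ S)) y := by
  induction y using TensorProduct.induction_on with
  | zero => simp
  | tmul p w =>
      induction w using TensorProduct.induction_on with
      | zero => simp
      | tmul q r =>
          simp [TensorProduct.assoc_symm_tmul, Algebra.TensorProduct.tmul_mul_tmul]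
      | add x y hx hy => simp only [TensorProduct.tmul_add, map_add, hx, hy]
  | add x y hx hy => simp only [map_add, hx, hy]

lemma claimC2gen (S : A →ₗ[ℂ] A) (c : A) (y : (A ⊗[ℂ] A) ⊗[ℂ] A) :
    LinearMap.mul' ℂ (A ⊗[ℂ] A)
      (TensorProduct.map
        ((TensorProduct.mk ℂ A A).flip 1 ∘ₗ LinearMap.mulLeft ℂ c ∘ₗ S) LinearMap.id
        (TensorProduct.assoc ℂ A A A y)) =
    TensorProduct.map
      (LinearMap.mul' ℂ A ∘ₗ TensorProduct.map (LinearMap.mulLeft ℂ c ∘ₗ S) LinearMap.id)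
      LinearMap.id y := by
  induction y using TensorProduct.induction_on with
  | zero => simp
  | tmul w s =>
      induction w using TensorProduct.induction_on with
      | zero => simp
      | tmul q r =>
          simp [TensorProduct.assoc_tmul, Algebra.TensorProduct.tmul_mul_tmul]
      | add x y hx hy => simp only [TensorProduct.add_tmul, map_add, hx, hy]
  | add x y hx hy => simp only [map_add, hx, hy]

-- used for the relation (1 ⊗ a)Δh = (S a ⊗ 1)Δh
lemma claimEgen (S : A →ₗ[ℂ] A) (y : (A ⊗[ℂ] A) ⊗[ℂ] A) :
    LinearMap.mul' ℂ (A ⊗[ℂ] A)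
      (TensorProduct.map ((TensorProduct.mk ℂ A A).flip 1 ∘ₗ S) LinearMap.id
        (TensorProduct.assoc ℂ A A A y)) =
    TensorProduct.map (LinearMap.mul' ℂ A ∘ₗ TensorProduct.map S LinearMap.id) LinearMap.id y := by
  induction y using TensorProduct.induction_on with
  | zero => simp
  | tmul w s =>
      induction w using TensorProduct.induction_on with
      | zero => simp
      | tmul p q =>
          simp [TensorProduct.assoc_tmul, Algebra.TensorProduct.tmul_mul_tmul]
      | add x y hx hy => simp only [TensorProduct.add_tmul, map_add, hx, hy]
  | add x y hx hy => simp only [map_add, hx, hy]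

lemma claimE'gen (S : A →ₗ[ℂ] A) (y : A ⊗[ℂ] (A ⊗[ℂ] A)) :
    LinearMap.mul' ℂ (A ⊗[ℂ] A)
      (TensorProduct.map LinearMap.id (TensorProduct.mk ℂ A A 1 ∘ₗ S)
        ((TensorProduct.assoc ℂ A A A).symm y)) =
    TensorProduct.map LinearMap.id (LinearMap.mul' ℂ A ∘ₗ TensorProduct.map LinearMap.id S) y := by
  induction y using TensorProduct.induction_on with
  | zero => simp
  | tmul p w =>
      induction w using TensorProduct.induction_on with
      | zero => simp
      | tmul q r =>
          simp [TensorProduct.assoc_symm_tmul, Algebra.TensorProduct.tmul_mul_tmul]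
      | add x y hx hy => simp only [TensorProduct.tmul_add, map_add, hx, hy]
  | add x y hx hy => simp only [map_add, hx, hy]

end LSAux3

set_option maxHeartbeats 4000000
set_option synthInstance.maxHeartbeats 1000000

/-- Larson-Sweedler theorem (cointegral version): if there exist a faithful left cointegral
and a faithful right cointegral, then the four canonical maps are bijective and `(A, Δ)` is
a Hopf algebra. -/
theorem larson_sweedler_cointegrals
    (Δ : A →ₐ[ℂ] A ⊗[ℂ] A) (hΔ : IsCoassoc Δ)
    (h : A) (hh : IsLeftCointegral Δ h)
    (hhf : leftLegOf (Δ h) = ⊤ ∧ rightLegOf (Δ h) = ⊤)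
    (k : A) (hk : IsRightCointegral Δ k)
    (hkf : leftLegOf (Δ k) = ⊤ ∧ rightLegOf (Δ k) = ⊤) :
    (Function.Bijective (T1 Δ) ∧ Function.Bijective (T1' Δ) ∧
      Function.Bijective (T2 Δ) ∧ Function.Bijective (T2' Δ)) ∧
    ∃ (ε : A →ₗ[ℂ] ℂ) (S : A →ₗ[ℂ] A), ∀ a : A,
      sliceL ε (Δ a) = a ∧ sliceR ε (Δ a) = a ∧
      LinearMap.mul' ℂ A (TensorProduct.map S LinearMap.id (Δ a)) = ε a • (1 : A) ∧
      LinearMap.mul' ℂ A (TensorProduct.map LinearMap.id S (Δ a)) = ε a • (1 : A) := by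
  classical
  obtain ⟨ωh, hωh⟩ := exists_one_functional hh.1
  obtain ⟨ωk, hωk⟩ := exists_one_functional hk.1
  -- the counit
  set ε : A →ₗ[ℂ] ℂ := ωh ∘ₗ LinearMap.mulRight ℂ h with hεdef
  have hεR : ∀ a : A, sliceR ε (Δ a) = a := by
    intro a
    rw [hεdef, slice_comp_R, hh.2 a, sliceR_tmul, hωh, one_smul]
  have hεL : ∀ a : A, sliceL ε (Δ a) = a := by
    have hε₂L : ∀ a : A, sliceL (ωk ∘ₗ LinearMap.mulLeft ℂ k) (Δ a) = a := by
      intro a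
      rw [slice_comp_L, hk.2 a, sliceL_tmul, hωk, one_smul]
    have hee : (ωk ∘ₗ LinearMap.mulLeft ℂ k) = ε := by
      ext a
      conv_lhs => rw [← hεR a]
      rw [apply_sliceR, hε₂L a]
    intro a; rw [← hee]; exact hε₂L a
  -- absorption identities
  have habs1 : ∀ a : A, a * h = ε a • h := by
    intro a
    have e := congrArg (sliceL ε) (hh.2 a)
    rwa [sliceL_mul_one_tmul, hεL a, sliceL_tmul] at e
  have habs2 : ∀ a : A, k * a = ε a • k := by
    intro a
    have e := congrArg (sliceR ε) (hk.2 a)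
    rwa [sliceR_tmul_one_mul, hεR a, sliceR_tmul] at e
  have hmulε : ∀ a b : A, ε (a * b) = ε a * ε b := by
    intro a b
    have e1 : (a * b) * h = (ε a * ε b) • h := by
      rw [mul_assoc, habs1 b, mul_smul_comm, habs1 a, smul_smul, mul_comm (ε b) (ε a)]
    have e2 := (habs1 (a * b)).symm.trans e1
    exact smul_left_injective ℂ hh.1 e2
  have habsΔh : ∀ a : A, Δ a * Δ h = ε a • Δ h := by
    intro a; rw [← map_mul, habs1 a, map_smul]
  have habsΔk : ∀ a : A, Δ k * Δ a = ε a • Δ k := by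
    intro a; rw [← map_mul, habs2 a, map_smul]
  have eps_mulR : ∀ w : A ⊗[ℂ] A, ε (LinearMap.mul' ℂ A w) = ε (sliceR ε w) := by
    intro w
    induction w using TensorProduct.induction_on with
    | zero => simp
    | tmul p q => simp [hmulε, mul_comm]
    | add x y hx hy => simp only [map_add, hx, hy]
  have eps_mulL : ∀ w : A ⊗[ℂ] A, ε (LinearMap.mul' ℂ A w) = ε (sliceL ε w) := by
    intro w
    induction w using TensorProduct.induction_on with
    | zero => simp
    | tmul p q => simp [hmulε]
    | add x y hx hy => simp only [map_add, hx, hy]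
  -- the two "antipode" identities
  have hANT1 : ∀ (ω : A →ₗ[ℂ] ℂ) (x : A),
      LinearMap.mul' ℂ A (TensorProduct.map (antL (Δ k) ω) LinearMap.id (Δ x)) =
        ε x • sliceL ω (Δ k) := by
    intro ω x
    obtain ⟨η, hη⟩ := exists_sliceR_eq (Δ h) hhf.1 x
    have key : ∀ ω' : A →ₗ[ℂ] ℂ,
        LinearMap.mul' ℂ A (TensorProduct.map (antL (Δ k) ω') LinearMap.id (Δ x)) =
          η h • sliceL ω' (Δ k) := by
      intro ω'
      have e1 : Δ x = sliceRM η (TensorProduct.map Δ.toLinearMap LinearMap.id (Δ h)) := by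
        conv_lhs => rw [← hη]
        exact D1r Δ η (Δ h)
      rw [e1, Jgen1, G1gen Δ (Δ k) ε habsΔk, hεL h, TensorProduct.map_tmul,
        sliceR_tmul, LinearMap.id_coe, id_eq]
    have hscalar : η h = ε x := by
      have e3 := congrArg ε (key ωk)
      rw [eps_mulR, sliceR_map_left, hεR x, antL_apply,
        ← apply_sliceR ωk ε, sliceR_mul_tmul_one, hεR k, habs2 x,
        map_smul, smul_eq_mul, hωk, mul_one,
        map_smul, smul_eq_mul, ← apply_sliceR ωk ε, hεR k, hωk, mul_one] at e3
      exact e3.symm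
    rw [key ω, hscalar]
  have hANT2 : ∀ (ω : A →ₗ[ℂ] ℂ) (x : A),
      LinearMap.mul' ℂ A (TensorProduct.map LinearMap.id (antR (Δ h) ω) (Δ x)) =
        ε x • sliceR ω (Δ h) := by
    intro ω x
    obtain ⟨η, hη⟩ := exists_sliceL_eq (Δ h) hhf.2 x
    have key : ∀ ω' : A →ₗ[ℂ] ℂ,
        LinearMap.mul' ℂ A (TensorProduct.map LinearMap.id (antR (Δ h) ω') (Δ x)) =
          η h • sliceR ω' (Δ h) := by
      intro ω'
      have e1 : Δ x = sliceLM η (TensorProduct.map LinearMap.id Δ.toLinearMap (Δ h)) := by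
        conv_lhs => rw [← hη]
        exact D1l Δ η (Δ h)
      rw [e1, Jgen2, H3gen Δ (Δ h) ε habsΔh, hεR h, TensorProduct.map_tmul,
        sliceL_tmul, LinearMap.id_coe, id_eq]
    have hscalar : η h = ε x := by
      have e3 := congrArg ε (key ωh)
      rw [eps_mulL, sliceL_map_right, hεL x, antR_apply,
        apply_sliceR ε ωh, sliceL_one_tmul_mul, hεL h, habs1 x,
        map_smul, smul_eq_mul, hωh, mul_one,
        map_smul, smul_eq_mul, apply_sliceR ε ωh, hεL h, hωh, mul_one] at e3
      exact e3.symm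
    rw [key ω, hscalar]
  -- choice of the antipode
  obtain ⟨ω₀, hω₀⟩ := exists_sliceR_eq (Δ h) hhf.1 (1:A)
  obtain ⟨ω₀', hω₀'⟩ := exists_sliceL_eq (Δ k) hkf.2 (1:A)
  set S : A →ₗ[ℂ] A := antR (Δ h) ω₀ with hSdef
  set S' : A →ₗ[ℂ] A := antL (Δ k) ω₀' with hS'def
  have hS'left : ∀ x : A,
      LinearMap.mul' ℂ A (TensorProduct.map S' LinearMap.id (Δ x)) = ε x • 1 := by
    intro x; rw [hS'def, hANT1 ω₀' x, hω₀']
  have hSright : ∀ x : A,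
      LinearMap.mul' ℂ A (TensorProduct.map LinearMap.id S (Δ x)) = ε x • 1 := by
    intro x; rw [hSdef, hANT2 ω₀ x, hω₀]
  -- S' = S by convolution associativity
  have hS'S : S' = S := by
    set uu : A →ₗ[ℂ] A := ε.smulRight (1:A) with huu
    have hconvS'id : convL Δ S' LinearMap.id = uu := by
      ext a; rw [convL_apply, hS'left a, huu, LinearMap.smulRight_apply]
    have hconvidS : convL Δ LinearMap.id S = uu := by
      ext a; rw [convL_apply, hSright a, huu, LinearMap.smulRight_apply]
    have hconv_ul : ∀ f : A →ₗ[ℂ] A, convL Δ uu f = f := by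
      intro f; ext a
      rw [convL_apply, huu, mul_map_smulRight_one_left, hεL a]
    have hconv_ur : ∀ f : A →ₗ[ℂ] A, convL Δ f uu = f := by
      intro f; ext a
      rw [convL_apply, huu, mul_map_smulRight_one_right, hεR a]
    calc S' = convL Δ S' uu := (hconv_ur S').symm
      _ = convL Δ S' (convL Δ LinearMap.id S) := by rw [hconvidS]
      _ = convL Δ (convL Δ S' LinearMap.id) S := (conv_assoc Δ hΔ S' LinearMap.id S).symm
      _ = convL Δ uu S := by rw [hconvS'id]
      _ = S := hconv_ul S
  have hSleft : ∀ x : A,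
      LinearMap.mul' ℂ A (TensorProduct.map S LinearMap.id (Δ x)) = ε x • 1 := by
    intro x; rw [← hS'S]; exact hS'left x
  -- the relations (1 ⊗ a)Δh = (S a ⊗ 1)Δh and Δk(a ⊗ 1) = Δk(1 ⊗ S a)
  have hstep1 : ∀ a : A,
      LinearMap.mul' ℂ (A ⊗[ℂ] A)
        (TensorProduct.map ((TensorProduct.mk ℂ A A).flip 1 ∘ₗ S) LinearMap.id
          (TensorProduct.map LinearMap.id Δ.toLinearMap (Δ a))) = (1:A) ⊗ₜ[ℂ] a := by
    intro a
    rw [← hΔ a, claimEgen, map_map_left]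
    have e3 : (LinearMap.mul' ℂ A ∘ₗ TensorProduct.map S LinearMap.id) ∘ₗ Δ.toLinearMap =
        ε.smulRight (1:A) := by
      ext p
      simp only [LinearMap.comp_apply, AlgHom.toLinearMap_apply, LinearMap.smulRight_apply]
      exact hSleft p
    rw [e3, map_smulRight_left, hεL a]
  have hRh : ∀ a : A, ((1:A) ⊗ₜ[ℂ] a) * Δ h = (S a ⊗ₜ[ℂ] (1:A)) * Δ h := by
    intro a
    have claimF : ∀ z : A ⊗[ℂ] A,
        LinearMap.mul' ℂ (A ⊗[ℂ] A)
          (TensorProduct.map ((TensorProduct.mk ℂ A A).flip 1 ∘ₗ S) LinearMap.id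
            (TensorProduct.map LinearMap.id Δ.toLinearMap z)) * Δ h =
        (S (sliceR ε z) ⊗ₜ[ℂ] (1:A)) * Δ h := by
      intro z
      induction z using TensorProduct.induction_on with
      | zero => simp
      | tmul p q =>
          simp only [TensorProduct.map_tmul, LinearMap.id_coe, id_eq,
            AlgHom.toLinearMap_apply, LinearMap.mul'_apply, LinearMap.comp_apply,
            LinearMap.flip_apply, TensorProduct.mk_apply, sliceR_tmul, map_smul,
            TensorProduct.smul_tmul', smul_mul_assoc]
          rw [mul_assoc, habsΔh q, mul_smul_comm, ← TensorProduct.smul_tmul',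
            smul_mul_assoc]
      | add x y hx hy =>
          simp only [map_add, add_mul, hx, hy, TensorProduct.add_tmul]
    have e := claimF (Δ a)
    rw [hstep1 a, hεR a] at e
    exact e
  have hstep2 : ∀ a : A,
      LinearMap.mul' ℂ (A ⊗[ℂ] A)
        (TensorProduct.map LinearMap.id (TensorProduct.mk ℂ A A 1 ∘ₗ S)
          (TensorProduct.map Δ.toLinearMap LinearMap.id (Δ a))) = a ⊗ₜ[ℂ] (1:A) := by
    intro a
    have ecoass : TensorProduct.map Δ.toLinearMap LinearMap.id (Δ a) =
        (TensorProduct.assoc ℂ A A A).symm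
          (TensorProduct.map LinearMap.id Δ.toLinearMap (Δ a)) :=
      (LinearEquiv.eq_symm_apply _).mpr (hΔ a)
    rw [ecoass, claimE'gen, map_map_right]
    have e3 : (LinearMap.mul' ℂ A ∘ₗ TensorProduct.map LinearMap.id S) ∘ₗ Δ.toLinearMap =
        ε.smulRight (1:A) := by
      ext p
      simp only [LinearMap.comp_apply, AlgHom.toLinearMap_apply, LinearMap.smulRight_apply]
      exact hSright p
    rw [e3, map_smulRight_right, hεR a]
  have hRk : ∀ a : A, Δ k * (a ⊗ₜ[ℂ] (1:A)) = Δ k * ((1:A) ⊗ₜ[ℂ] S a) := by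
    intro a
    have claimF' : ∀ z : A ⊗[ℂ] A,
        Δ k * LinearMap.mul' ℂ (A ⊗[ℂ] A)
          (TensorProduct.map LinearMap.id (TensorProduct.mk ℂ A A 1 ∘ₗ S)
            (TensorProduct.map Δ.toLinearMap LinearMap.id z)) =
        Δ k * ((1:A) ⊗ₜ[ℂ] S (sliceL ε z)) := by
      intro z
      induction z using TensorProduct.induction_on with
      | zero => simp
      | tmul p q =>
          simp only [TensorProduct.map_tmul, LinearMap.id_coe, id_eq,
            AlgHom.toLinearMap_apply, LinearMap.mul'_apply, LinearMap.comp_apply,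
            TensorProduct.mk_apply, sliceL_tmul, map_smul, TensorProduct.tmul_smul]
          rw [← mul_assoc, habsΔk p, smul_mul_assoc, mul_smul_comm]
      | add x y hx hy =>
          simp only [map_add, mul_add, hx, hy, TensorProduct.tmul_add]
    have e := claimF' (Δ a)
    rw [hstep2 a, hεL a] at e
    exact e
  -- injectivity of S, finite dimensionality
  have hSinj : Function.Injective S := by
    have hker : ∀ a : A, S a = 0 → a = 0 := by
      intro a ha
      obtain ⟨ω₃, hω₃⟩ := exists_sliceL_eq (Δ h) hhf.2 (1:A)
      have e := hRh a
      rw [ha, TensorProduct.zero_tmul, zero_mul] at e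
      have e2 := congrArg (sliceL ω₃) e
      rwa [sliceL_one_tmul_mul, hω₃, mul_one, map_zero] at e2
    intro a b e
    have := hker (a - b) (by rw [map_sub, e, sub_self])
    exact sub_eq_zero.mp this
  haveI hfd : FiniteDimensional ℂ A := finiteDimensional_of_leftLegOf (Δ h) hhf.1
  have hSbij : Function.Bijective S := ⟨hSinj, LinearMap.injective_iff_surjective.mp hSinj⟩
  have hmapSid_inj :
      Function.Injective (TensorProduct.map S LinearMap.id : A ⊗[ℂ] A →ₗ[ℂ] A ⊗[ℂ] A) := by
    have e : (TensorProduct.map S LinearMap.id : A ⊗[ℂ] A →ₗ[ℂ] A ⊗[ℂ] A) =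
        (TensorProduct.congr (LinearEquiv.ofBijective S hSbij)
          (LinearEquiv.refl ℂ A)).toLinearMap := by
      apply TensorProduct.ext'
      intro a b
      simp [TensorProduct.congr_tmul, LinearEquiv.ofBijective_apply]
    rw [e]
    exact (TensorProduct.congr (LinearEquiv.ofBijective S hSbij)
      (LinearEquiv.refl ℂ A)).injective
  have hmapidS_inj :
      Function.Injective (TensorProduct.map LinearMap.id S : A ⊗[ℂ] A →ₗ[ℂ] A ⊗[ℂ] A) := by
    have e : (TensorProduct.map LinearMap.id S : A ⊗[ℂ] A →ₗ[ℂ] A ⊗[ℂ] A) =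
        (TensorProduct.congr (LinearEquiv.refl ℂ A)
          (LinearEquiv.ofBijective S hSbij)).toLinearMap := by
      apply TensorProduct.ext'
      intro a b
      simp [TensorProduct.congr_tmul, LinearEquiv.ofBijective_apply]
    rw [e]
    exact (TensorProduct.congr (LinearEquiv.refl ℂ A)
      (LinearEquiv.ofBijective S hSbij)).injective
  -- T1 is bijective, with explicit inverse R1
  set R1 : A ⊗[ℂ] A →ₗ[ℂ] A ⊗[ℂ] A :=
    (TensorProduct.map LinearMap.id (LinearMap.mul' ℂ A ∘ₗ TensorProduct.map S LinearMap.id)) ∘ₗ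
      (TensorProduct.assoc ℂ A A A).toLinearMap ∘ₗ
      (TensorProduct.map Δ.toLinearMap LinearMap.id) with hR1def
  have hR1_tmul : ∀ (c v : A), R1 (c ⊗ₜ[ℂ] v) =
      TensorProduct.map LinearMap.id (LinearMap.mul' ℂ A ∘ₗ TensorProduct.map S LinearMap.id)
        (TensorProduct.assoc ℂ A A A (Δ c ⊗ₜ[ℂ] v)) := by
    intro c v
    rw [hR1def]
    simp only [LinearMap.comp_apply, LinearEquiv.coe_coe, TensorProduct.map_tmul,
      LinearMap.id_coe, id_eq, AlgHom.toLinearMap_apply]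
  have hT1R1 : ∀ z, T1 Δ (R1 z) = z := by
    have hcomp : (T1 Δ) ∘ₗ R1 = LinearMap.id := by
      apply TensorProduct.ext'
      intro c d
      simp only [LinearMap.comp_apply, LinearMap.id_coe, id_eq]
      rw [hR1_tmul]
      have claimB : ∀ (w : A ⊗[ℂ] A),
          T1 Δ (TensorProduct.map LinearMap.id
              (LinearMap.mul' ℂ A ∘ₗ TensorProduct.map S LinearMap.id)
            (TensorProduct.assoc ℂ A A A (w ⊗ₜ[ℂ] d))) =
          LinearMap.mul' ℂ (A ⊗[ℂ] A)
            (TensorProduct.map LinearMap.id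
              (TensorProduct.mk ℂ A A 1 ∘ₗ LinearMap.mulRight ℂ d ∘ₗ S)
              (TensorProduct.map Δ.toLinearMap LinearMap.id w)) := by
        intro w
        induction w using TensorProduct.induction_on with
        | zero => simp
        | tmul p q => simp [TensorProduct.assoc_tmul]
        | add x y hx hy => simp only [TensorProduct.add_tmul, map_add, hx, hy]
      rw [claimB (Δ c)]
      have ecoass : TensorProduct.map Δ.toLinearMap LinearMap.id (Δ c) =
          (TensorProduct.assoc ℂ A A A).symm
            (TensorProduct.map LinearMap.id Δ.toLinearMap (Δ c)) :=
        (LinearEquiv.eq_symm_apply _).mpr (hΔ c)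
      rw [ecoass, claimB2gen, map_map_right]
      have e3 : (LinearMap.mul' ℂ A ∘ₗ
          TensorProduct.map LinearMap.id (LinearMap.mulRight ℂ d ∘ₗ S)) ∘ₗ Δ.toLinearMap =
          ε.smulRight d := by
        ext p
        simp only [LinearMap.comp_apply, AlgHom.toLinearMap_apply, LinearMap.smulRight_apply]
        rw [mulvar_right LinearMap.id S d (Δ p), hSright p, smul_mul_assoc, one_mul]
      rw [e3, map_smulRight_right, hεR c]
    intro z
    have := LinearMap.congr_fun hcomp z
    simpa using this
  have hR1T1 : ∀ z, R1 (T1 Δ z) = z := by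
    have hcomp : R1 ∘ₗ (T1 Δ) = LinearMap.id := by
      apply TensorProduct.ext'
      intro c d
      simp only [LinearMap.comp_apply, LinearMap.id_coe, id_eq, T1_tmul]
      have claimA : ∀ z : A ⊗[ℂ] A, R1 (z * ((1:A) ⊗ₜ[ℂ] d)) =
          TensorProduct.map LinearMap.id
            (LinearMap.mul' ℂ A ∘ₗ TensorProduct.map S (LinearMap.mulRight ℂ d))
            (TensorProduct.assoc ℂ A A A
              (TensorProduct.map Δ.toLinearMap LinearMap.id z)) := by
        intro z
        induction z using TensorProduct.induction_on with
        | zero => simp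
        | tmul p q =>
            rw [Algebra.TensorProduct.tmul_mul_tmul, mul_one, hR1_tmul,
              TensorProduct.map_tmul]
            simp only [LinearMap.id_coe, id_eq, AlgHom.toLinearMap_apply]
            exact inner1 S q d (Δ p)
        | add x y hx hy => simp only [add_mul, map_add, hx, hy]
      rw [claimA (Δ c), hΔ c, map_map_right]
      have e3 : (LinearMap.mul' ℂ A ∘ₗ
          TensorProduct.map S (LinearMap.mulRight ℂ d)) ∘ₗ Δ.toLinearMap =
          ε.smulRight d := by
        ext p
        simp only [LinearMap.comp_apply, AlgHom.toLinearMap_apply, LinearMap.smulRight_apply]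
        have e4 := mulvar_right S LinearMap.id d (Δ p)
        rw [LinearMap.comp_id] at e4
        rw [e4, hSleft p, smul_mul_assoc, one_mul]
      rw [e3, map_smulRight_right, hεR c]
    intro z
    have := LinearMap.congr_fun hcomp z
    simpa using this
  -- T2 is bijective, with explicit inverse R2
  set R2 : A ⊗[ℂ] A →ₗ[ℂ] A ⊗[ℂ] A :=
    (TensorProduct.map (LinearMap.mul' ℂ A ∘ₗ TensorProduct.map LinearMap.id S) LinearMap.id) ∘ₗ
      (TensorProduct.assoc ℂ A A A).symm.toLinearMap ∘ₗ
      (TensorProduct.map LinearMap.id Δ.toLinearMap) with hR2def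
  have hR2_tmul : ∀ (c v : A), R2 (c ⊗ₜ[ℂ] v) =
      TensorProduct.map (LinearMap.mul' ℂ A ∘ₗ TensorProduct.map LinearMap.id S) LinearMap.id
        ((TensorProduct.assoc ℂ A A A).symm (c ⊗ₜ[ℂ] Δ v)) := by
    intro c v
    rw [hR2def]
    simp only [LinearMap.comp_apply, LinearEquiv.coe_coe, TensorProduct.map_tmul,
      LinearMap.id_coe, id_eq, AlgHom.toLinearMap_apply]
  have hT2R2 : ∀ z, T2 Δ (R2 z) = z := by
    have hcomp : (T2 Δ) ∘ₗ R2 = LinearMap.id := by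
      apply TensorProduct.ext'
      intro c d
      simp only [LinearMap.comp_apply, LinearMap.id_coe, id_eq]
      rw [hR2_tmul]
      have claimC : ∀ (x : A ⊗[ℂ] A),
          T2 Δ (TensorProduct.map (LinearMap.mul' ℂ A ∘ₗ TensorProduct.map LinearMap.id S)
              LinearMap.id ((TensorProduct.assoc ℂ A A A).symm (c ⊗ₜ[ℂ] x))) =
          LinearMap.mul' ℂ (A ⊗[ℂ] A)
            (TensorProduct.map
              ((TensorProduct.mk ℂ A A).flip 1 ∘ₗ LinearMap.mulLeft ℂ c ∘ₗ S) LinearMap.id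
              (TensorProduct.map LinearMap.id Δ.toLinearMap x)) := by
        intro x
        induction x using TensorProduct.induction_on with
        | zero => simp
        | tmul q r => simp [TensorProduct.assoc_symm_tmul]
        | add x y hx hy => simp only [TensorProduct.tmul_add, map_add, hx, hy]
      rw [claimC (Δ d), ← hΔ d, claimC2gen, map_map_left]
      have e3 : (LinearMap.mul' ℂ A ∘ₗ
          TensorProduct.map (LinearMap.mulLeft ℂ c ∘ₗ S) LinearMap.id) ∘ₗ Δ.toLinearMap =
          ε.smulRight c := by
        ext p
        simp only [LinearMap.comp_apply, AlgHom.toLinearMap_apply, LinearMap.smulRight_apply]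
        rw [mulvar_left S LinearMap.id c (Δ p), hSleft p, mul_smul_comm, mul_one]
      rw [e3, map_smulRight_left, hεL d]
    intro z
    have := LinearMap.congr_fun hcomp z
    simpa using this
  have hR2T2 : ∀ z, R2 (T2 Δ z) = z := by
    have hcomp : R2 ∘ₗ (T2 Δ) = LinearMap.id := by
      apply TensorProduct.ext'
      intro c d
      simp only [LinearMap.comp_apply, LinearMap.id_coe, id_eq, T2_tmul]
      have claimD : ∀ z : A ⊗[ℂ] A, R2 ((c ⊗ₜ[ℂ] (1:A)) * z) =
          TensorProduct.map
            (LinearMap.mul' ℂ A ∘ₗ TensorProduct.map (LinearMap.mulLeft ℂ c) S) LinearMap.id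
            ((TensorProduct.assoc ℂ A A A).symm
              (TensorProduct.map LinearMap.id Δ.toLinearMap z)) := by
        intro z
        induction z using TensorProduct.induction_on with
        | zero => simp
        | tmul q r =>
            rw [Algebra.TensorProduct.tmul_mul_tmul, one_mul, hR2_tmul,
              TensorProduct.map_tmul]
            simp only [LinearMap.id_coe, id_eq, AlgHom.toLinearMap_apply]
            exact inner2 S q c (Δ r)
        | add x y hx hy => simp only [mul_add, map_add, hx, hy]
      rw [claimD (Δ d)]
      have ecoass : (TensorProduct.assoc ℂ A A A).symm
          (TensorProduct.map LinearMap.id Δ.toLinearMap (Δ d)) =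
          TensorProduct.map Δ.toLinearMap LinearMap.id (Δ d) :=
        ((LinearEquiv.eq_symm_apply _).mpr (hΔ d)).symm
      rw [ecoass, map_map_left]
      have e3 : (LinearMap.mul' ℂ A ∘ₗ
          TensorProduct.map (LinearMap.mulLeft ℂ c) S) ∘ₗ Δ.toLinearMap =
          ε.smulRight c := by
        ext p
        simp only [LinearMap.comp_apply, AlgHom.toLinearMap_apply, LinearMap.smulRight_apply]
        have e4 := mulvar_left LinearMap.id S c (Δ p)
        rw [LinearMap.comp_id] at e4
        rw [e4, hSright p, mul_smul_comm, mul_one]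
      rw [e3, map_smulRight_left, hεL d]
    intro z
    have := LinearMap.congr_fun hcomp z
    simpa using this
  -- T1' is injective (hence bijective)
  have hXi1 : ∀ a b : A,
      TensorProduct.map (sliceL ω₀') LinearMap.id
        ((Δ k ⊗ₜ[ℂ] (1:A)) *
          ((TensorProduct.assoc ℂ A A A).symm
            (TensorProduct.map LinearMap.id Δ.toLinearMap (T1' Δ (a ⊗ₜ[ℂ] b))))) =
      S b ⊗ₜ[ℂ] a := by
    intro a b
    rw [T1'_tmul, m1 Δ b (Δ a), m2]
    have ecoass : (TensorProduct.assoc ℂ A A A).symm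
        (TensorProduct.map LinearMap.id Δ.toLinearMap (Δ a)) =
        TensorProduct.map Δ.toLinearMap LinearMap.id (Δ a) :=
      ((LinearEquiv.eq_symm_apply _).mpr (hΔ a)).symm
    rw [ecoass, ← mul_assoc, G1gen Δ (Δ k) ε habsΔk, hεL a,
      Algebra.TensorProduct.tmul_mul_tmul, mul_one, hRk b, TensorProduct.map_tmul]
    simp only [LinearMap.id_coe, id_eq]
    rw [sliceL_mul_one_tmul, hω₀', one_mul]
  have hT1'inj : Function.Injective (T1' Δ) := by
    have hcomp : (TensorProduct.map (sliceL ω₀') LinearMap.id) ∘ₗ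
        (LinearMap.mulLeft ℂ ((Δ k) ⊗ₜ[ℂ] (1:A))) ∘ₗ
        (TensorProduct.assoc ℂ A A A).symm.toLinearMap ∘ₗ
        (TensorProduct.map LinearMap.id Δ.toLinearMap) ∘ₗ (T1' Δ) =
        (TensorProduct.map S LinearMap.id) ∘ₗ (TensorProduct.comm ℂ A A).toLinearMap := by
      apply TensorProduct.ext'
      intro a b
      simp only [LinearMap.comp_apply, LinearEquiv.coe_coe, LinearMap.mulLeft_apply,
        TensorProduct.comm_tmul, TensorProduct.map_tmul, LinearMap.id_coe, id_eq]
      exact hXi1 a b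
    intro x y e
    have ex := LinearMap.congr_fun hcomp x
    have ey := LinearMap.congr_fun hcomp y
    simp only [LinearMap.comp_apply] at ex ey
    rw [e] at ex
    have e2 := hmapSid_inj (ex.symm.trans ey)
    exact (TensorProduct.comm ℂ A A).injective e2
  -- T2' is injective (hence bijective)
  have hXi2 : ∀ a b : A,
      TensorProduct.map LinearMap.id (sliceR ω₀)
        (((TensorProduct.assoc ℂ A A A)
            (TensorProduct.map Δ.toLinearMap LinearMap.id (T2' Δ (a ⊗ₜ[ℂ] b)))) *
          ((1:A) ⊗ₜ[ℂ] Δ h)) = b ⊗ₜ[ℂ] S a := by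
    intro a b
    rw [T2'_tmul, m1' Δ a (Δ b), m2', hΔ b, mul_assoc, H3gen Δ (Δ h) ε habsΔh, hεR b,
      Algebra.TensorProduct.tmul_mul_tmul, one_mul, hRh a, TensorProduct.map_tmul]
    simp only [LinearMap.id_coe, id_eq]
    rw [sliceR_tmul_one_mul, hω₀, mul_one]
  have hT2'inj : Function.Injective (T2' Δ) := by
    have hcomp : (TensorProduct.map LinearMap.id (sliceR ω₀)) ∘ₗ
        (LinearMap.mulRight ℂ ((1:A) ⊗ₜ[ℂ] (Δ h))) ∘ₗ
        (TensorProduct.assoc ℂ A A A).toLinearMap ∘ₗ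
        (TensorProduct.map Δ.toLinearMap LinearMap.id) ∘ₗ (T2' Δ) =
        (TensorProduct.map LinearMap.id S) ∘ₗ (TensorProduct.comm ℂ A A).toLinearMap := by
      apply TensorProduct.ext'
      intro a b
      simp only [LinearMap.comp_apply, LinearEquiv.coe_coe, LinearMap.mulRight_apply,
        TensorProduct.comm_tmul, TensorProduct.map_tmul, LinearMap.id_coe, id_eq]
      exact hXi2 a b
    intro x y e
    have ex := LinearMap.congr_fun hcomp x
    have ey := LinearMap.congr_fun hcomp y
    simp only [LinearMap.comp_apply] at ex ey
    rw [e] at ex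
    have e2 := hmapidS_inj (ex.symm.trans ey)
    exact (TensorProduct.comm ℂ A A).injective e2
  haveI : Module.Finite ℂ (A ⊗[ℂ] A) := Module.Finite.tensorProduct ℂ A A
  refine ⟨⟨Function.bijective_iff_has_inverse.mpr ⟨R1, hR1T1, hT1R1⟩,
      ⟨hT1'inj, LinearMap.injective_iff_surjective.mp hT1'inj⟩,
      Function.bijective_iff_has_inverse.mpr ⟨R2, hR2T2, hT2R2⟩,
      ⟨hT2'inj, LinearMap.injective_iff_surjective.mp hT2'inj⟩⟩,
    ε, S, fun a => ⟨hεL a, hεR a, hSleft a, hSright a⟩⟩
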